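/- arXiv:1004.4753 — 7 statements merged into one kernel-verified Lean document; each statement's English description precedes it below -/
import Mathlib

section
/- For every positive integer n, the admissible pair through a point of Δ⁺ is unique: if u, v ∈ ℝⁿ with u ≺ v, and (l,b), (l',b') are admissible pairs and s < t, s' < t' are real numbers such that u = s·l + b, v = t·l + b, u = s'·l' + b', and v = t'·l' + b', then l = l', b = b', s = s', and t = t'. -/
/-- The admissible pair through a point of `Δ⁺` is unique: if `(l,b)` and `(l',b')`
are admissible pairs whose half-planes both contain `(u,v)` with `u ≺ v`, then
`l = l'`, `b = b'`, and the parameters `s, t` coincide as well. -/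
theorem admissible_pair_through_point_unique (n : ℕ) (hn : 0 < n)
    (u v : Fin n → ℝ) (huv : ∀ i, u i < v i)
    (l b l' b' : Fin n → ℝ)
    (hl : ∀ i, 0 < l i) (hlnorm : ∑ i, (l i) ^ 2 = 1) (hb : ∑ i, b i = 0)
    (hl' : ∀ i, 0 < l' i) (hlnorm' : ∑ i, (l' i) ^ 2 = 1) (hb' : ∑ i, b' i = 0)
    (s t s' t' : ℝ) (hst : s < t) (hst' : s' < t')
    (hu : ∀ i, u i = s * l i + b i) (hv : ∀ i, v i = t * l i + b i)
    (hu' : ∀ i, u i = s' * l' i + b' i) (hv' : ∀ i, v i = t' * l' i + b' i) :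
    l = l' ∧ b = b' ∧ s = s' ∧ t = t' := by
  have hcpos : 0 < t - s := sub_pos.mpr hst
  have hcpos' : 0 < t' - s' := sub_pos.mpr hst'
  have key : ∀ i, (t - s) * l i = (t' - s') * l' i := by
    intro i
    have h1 := hu i; have h2 := hv i
    have h3 := hu' i; have h4 := hv' i
    have e1 : (t - s) * l i = v i - u i := by rw [h1, h2]; ring
    have e2 : (t' - s') * l' i = v i - u i := by rw [h3, h4]; ring
    linarith
  have hsq : (t - s) ^ 2 = (t' - s') ^ 2 := by
    have hsum : ∑ i, ((t - s) * l i) ^ 2 = ∑ i, ((t' - s') * l' i) ^ 2 :=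
      Finset.sum_congr rfl fun i _ => by rw [key i]
    simpa [mul_pow, ← Finset.mul_sum, hlnorm, hlnorm'] using hsum
  have hcc : t - s = t' - s' := by nlinarith
  have hll : l = l' := by
    funext i
    have h := key i
    rw [hcc] at h
    exact mul_left_cancel₀ (ne_of_gt hcpos') h
  have hsuml : 0 < ∑ i, l i :=
    Finset.sum_pos (fun i _ => hl i)
      (Finset.univ_nonempty_iff.mpr ⟨⟨0, hn⟩⟩)
  have hsum : s * ∑ i, l i = s' * ∑ i, l i := by
    have h1 : ∑ i, u i = s * ∑ i, l i + ∑ i, b i := by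
      simp [hu, Finset.mul_sum, Finset.sum_add_distrib]
    have h2 : ∑ i, u i = s' * ∑ i, l' i + ∑ i, b' i := by
      simp [hu', Finset.mul_sum, Finset.sum_add_distrib]
    rw [hb] at h1; rw [hb', ← hll] at h2
    linarith
  have hss : s = s' := mul_right_cancel₀ (ne_of_gt hsuml) hsum
  have htt : t = t' := by linarith
  have hbb : b = b' := by
    funext i
    have h1 := hu i; have h2 := hu' i
    rw [hll] at h1
    rw [← hss] at h2
    linarith
  exact ⟨hll, hbb, hss, htt⟩
end

section
/- For every positive integer n and every pair of vectors u, v ∈ ℝⁿ with u ≺ v, define λ ∈ ℝⁿ by λ_i = (v_i − u_i)/Σ_{j=1}^n (v_j − u_j) and β ∈ ℝⁿ by β_i = (u_i·Σ_{j=1}^n v_j − v_i·Σ_{j=1}^n u_j)/Σ_{j=1}^n (v_j − u_j). Then λ_i > 0 for every i, Σ_{i=1}^n λ_i = 1, Σ_{i=1}^n β_i = 0 (so (λ,β) ∈ Ladm_n), and there exist real numbers s < t (namely s = Σ_{j=1}^n u_j and t = Σ_{j=1}^n v_j) such that u = s·λ + β and v = t·λ + β. -/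
/-! With `s = ∑ u` and `t = ∑ v`, the pair `(u i, v i)` is the value at `s` and `t` of the
affine function `r ↦ r * λ i + β i` of slope `(v i - u i) / (t - s)` through both points;
summing the slopes and intercepts over `i` gives `1` and `0`. -/

open Finset

theorem eq_mul_slope_add_intercept_left {a b s t : ℝ} (hst : s ≠ t) :
    a = s * ((b - a) / (t - s)) + (a * t - b * s) / (t - s) := by
  field_simp [sub_ne_zero.mpr hst.symm]
  ring

theorem eq_mul_slope_add_intercept_right {a b s t : ℝ} (hst : s ≠ t) :
    b = t * ((b - a) / (t - s)) + (a * t - b * s) / (t - s) := by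
  field_simp [sub_ne_zero.mpr hst.symm]
  ring

section

variable {ι : Type*} [Fintype ι] (u v : ι → ℝ)

theorem sum_sub_pos_of_forall_lt [Nonempty ι] (h : ∀ i, u i < v i) :
    0 < ∑ i, (v i - u i) :=
  sum_pos (fun i _ => sub_pos.mpr (h i)) univ_nonempty

theorem sum_div_sum_eq_one {f : ι → ℝ} (hf : ∑ j, f j ≠ 0) : ∑ i, f i / ∑ j, f j = 1 := by
  rw [← sum_div, div_self hf]

theorem sum_mul_sum_sub_mul_sum_div_eq_zero (d : ℝ) :
    ∑ i, (u i * ∑ j, v j - v i * ∑ j, u j) / d = 0 := by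
  rw [← sum_div, sum_sub_distrib, ← sum_mul, ← sum_mul, mul_comm, sub_self, zero_div]

end

/-- For every `(u,v) ∈ Δ⁺`, the explicitly defined pair `(λ, β)` with
`λ i = (v i − u i)/∑ j (v j − u j)` and
`β i = (u i·∑ j v j − v i·∑ j u j)/∑ j (v j − u j)`
belongs to `Ladm_n` and its half-plane passes through `(u,v)`, with parameters
`s = ∑ j u j` and `t = ∑ j v j`. -/
theorem ladm_pair_through_point (n : ℕ) (hn : 0 < n)
    (u v : Fin n → ℝ) (huv : ∀ i, u i < v i)
    (lam beta : Fin n → ℝ)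
    (hlam : ∀ i, lam i = (v i - u i) / ∑ j, (v j - u j))
    (hbeta : ∀ i, beta i = (u i * ∑ j, v j - v i * ∑ j, u j) / ∑ j, (v j - u j)) :
    (∀ i, 0 < lam i) ∧ (∑ i, lam i = 1) ∧ (∑ i, beta i = 0) ∧
    ∃ s t : ℝ, s = ∑ j, u j ∧ t = ∑ j, v j ∧ s < t ∧
      (∀ i, u i = s * lam i + beta i) ∧ (∀ i, v i = t * lam i + beta i) := by
  have : Nonempty (Fin n) := Fin.pos_iff_nonempty.mp hn
  have hpos := sum_sub_pos_of_forall_lt u v huv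
  refine ⟨fun i => hlam i ▸ div_pos (sub_pos.mpr (huv i)) hpos, ?_, ?_, ?_⟩
  · simp_rw [hlam]
    exact sum_div_sum_eq_one hpos.ne'
  · simp_rw [hbeta]
    exact sum_mul_sum_sub_mul_sum_div_eq_zero u v _
  · rw [sum_sub_distrib, sub_pos] at hpos
    simp_rw [sum_sub_distrib] at hlam hbeta
    refine ⟨_, _, rfl, rfl, hpos, fun i => ?_, fun i => ?_⟩
    · rw [hlam, hbeta]
      exact eq_mul_slope_add_intercept_left hpos.ne
    · rw [hlam, hbeta]
      exact eq_mul_slope_add_intercept_right hpos.ne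
end

section
/- Let a, b ∈ ℝ with a > 0, let g : ℝ² → ℝ² be defined by g(u,v) = (a·u + b, a·v + b), and let m be a natural number. For any two families of points p, q : {1,…,m} → ℝ², define D(p,q) as the infimum, over all permutations σ of {1,…,m}, of max_{i} ‖p(i) − q(σ(i))‖_~∞ (so D(p,q) = 0 if m = 0). Then D(g∘p, g∘q) = a · D(p,q). -/
/-- The pseudodistance `‖p − q‖_~∞` between points of the plane: the minimum between
the cost of moving one point onto the other (max-norm) and the cost of moving both
points onto the diagonal. -/
noncomputable def tildeDist (p q : ℝ × ℝ) : ℝ :=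
  min (max |p.1 - q.1| |p.2 - q.2|) (max ((p.2 - p.1) / 2) ((q.2 - q.1) / 2))

/-- The bottleneck-type matching cost between two families of `m` points of the
plane: the infimum, over all permutations `σ` of `{1,…,m}`, of
`max_i ‖p i − q (σ i)‖_~∞`.  (For `m = 0` the inner supremum over the empty index
type is `0` by convention, so `matchCost 0 p q = 0`.) -/
noncomputable def matchCost (m : ℕ) (p q : Fin m → ℝ × ℝ) : ℝ :=
  ⨅ σ : Equiv.Perm (Fin m), ⨆ i, tildeDist (p i) (q (σ i))

lemma tildeDist_affine (a b : ℝ) (ha : 0 ≤ a) (x y : ℝ × ℝ) :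
    tildeDist (a * x.1 + b, a * x.2 + b) (a * y.1 + b, a * y.2 + b)
      = a * tildeDist x y := by
  unfold tildeDist
  simp only
  have h1 : a * x.1 + b - (a * y.1 + b) = a * (x.1 - y.1) := by ring
  have h2 : a * x.2 + b - (a * y.2 + b) = a * (x.2 - y.2) := by ring
  have h3 : (a * x.2 + b - (a * x.1 + b)) / 2 = a * ((x.2 - x.1) / 2) := by ring
  have h4 : (a * y.2 + b - (a * y.1 + b)) / 2 = a * ((y.2 - y.1) / 2) := by ring
  rw [h1, h2, h3, h4, abs_mul, abs_mul, abs_of_nonneg ha,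
    ← mul_max_of_nonneg _ _ ha, ← mul_max_of_nonneg _ _ ha,
    ← mul_min_of_nonneg _ _ ha]

/-- The matching cost scales by `a` under the affine map
`g(u,v) = (a·u + b, a·v + b)` with `a > 0`. -/
theorem matchCost_affine_scaling (a b : ℝ) (ha : 0 < a)
    (g : ℝ × ℝ → ℝ × ℝ) (hg : ∀ x, g x = (a * x.1 + b, a * x.2 + b))
    (m : ℕ) (p q : Fin m → ℝ × ℝ) :
    matchCost m (g ∘ p) (g ∘ q) = a * matchCost m p q := by
  unfold matchCost
  rw [Real.mul_iInf_of_nonneg ha.le]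
  congr 1
  funext σ
  rw [Real.mul_iSup_of_nonneg ha.le]
  congr 1
  funext i
  rw [Function.comp_apply, Function.comp_apply, hg, hg, tildeDist_affine a b ha.le]
end

section
/- Let n be a positive integer and let Λ, B ⊆ ℝⁿ be such that the family of half-planes {π_(λ,β)}_{(λ,β) ∈ Λ×B} foliates Δ⁺, i.e.: (existence) for every (u,v) ∈ Δ⁺ there exist λ ∈ Λ, β ∈ B, and real numbers s < t with u = s·λ + β and v = t·λ + β; (uniqueness) this pair (λ,β) is unique for each (u,v) ∈ Δ⁺; and (containment) for every (λ,β) ∈ Λ×B, π_(λ,β) ⊆ Δ⁺. Then for every w = (w_1,…,w_n) ∈ ℝⁿ with w_i > 0 for every i, there exists one and only one λ ∈ Λ such that w = a·λ for a suitable real value a > 0. -/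
/-!
The pair `(0, w)` lies in `Δ⁺`, so it lies on some leaf `π_(λ,β)`: `0 = s·λ + β` and `w = t·λ + β`,
whence `w = (t - s)·λ`. If also `w = a·λ'` with `a > 0` and `λ' ∈ Λ`, then `λ = c·λ'` with `c > 0`,
so `π_(λ,β)` is `π_(λ',β)` with the parameters scaled by `c`; uniqueness of the leaf through `(0, w)`
gives `λ' = λ`.
-/

theorem half_plane_point_rescale {ι : Type*} {lam lam' : ι → ℝ} (beta : ι → ℝ) {c : ℝ}
    (h : ∀ i, lam i = c * lam' i) (s : ℝ) :
    (fun i => s * lam i + beta i) = fun i => (s * c) * lam' i + beta i := by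
  funext i
  rw [h i, mul_assoc]

theorem unique_direction_through_positive_vector_general (n : ℕ)
    (Lam B : Set (Fin n → ℝ))
    (hex : ∀ u v : Fin n → ℝ, (∀ i, u i < v i) →
      ∃ lam ∈ Lam, ∃ beta ∈ B, ∃ s t : ℝ, s < t ∧
        u = (fun i => s * lam i + beta i) ∧ v = (fun i => t * lam i + beta i))
    (huniq : ∀ u v : Fin n → ℝ, (∀ i, u i < v i) →
      ∀ lam ∈ Lam, ∀ beta ∈ B, ∀ lam' ∈ Lam, ∀ beta' ∈ B,
      ∀ s t s' t' : ℝ, s < t → s' < t' →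
        u = (fun i => s * lam i + beta i) → v = (fun i => t * lam i + beta i) →
        u = (fun i => s' * lam' i + beta' i) → v = (fun i => t' * lam' i + beta' i) →
        lam = lam' ∧ beta = beta') :
    ∀ w : Fin n → ℝ, (∀ i, 0 < w i) →
      ∃! lam, lam ∈ Lam ∧ ∃ a : ℝ, 0 < a ∧ ∀ i, w i = a * lam i := by
  intro w hw
  obtain ⟨lam, hlam, beta, hbeta, s, t, hst, h0, hwst⟩ := hex 0 w hw
  have hts : 0 < t - s := sub_pos.2 hst
  have hw_lam : ∀ i, w i = (t - s) * lam i := by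
    intro i
    have h0i := congrFun h0 i
    rw [congrFun hwst i]
    simp only [Pi.zero_apply] at h0i
    linarith
  refine ⟨lam, ⟨hlam, t - s, hts, hw_lam⟩, ?_⟩
  rintro lam' ⟨hlam', a, ha, hw_lam'⟩
  have hscale : ∀ i, lam i = a / (t - s) * lam' i := by
    intro i
    rw [div_mul_eq_mul_div, eq_div_iff hts.ne', ← hw_lam', hw_lam, mul_comm]
  have hc : 0 < a / (t - s) := div_pos ha hts
  exact (huniq 0 w hw lam hlam beta hbeta lam' hlam' beta hbeta s t _ _ hst
    (mul_lt_mul_of_pos_right hst hc) h0 hwst (h0.trans (half_plane_point_rescale beta hscale s))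
    (hwst.trans (half_plane_point_rescale beta hscale t))).1.symm

/-- If the family of half-planes `{π_(λ,β)}_{(λ,β) ∈ Λ×B}` foliates `Δ⁺`
(existence, uniqueness, and containment), then for every `w ∈ ℝⁿ` with all
components strictly positive there exists one and only one `λ ∈ Λ` such that
`w = a·λ` for a suitable real value `a > 0`. -/
theorem unique_direction_through_positive_vector (n : ℕ) (hn : 0 < n)
    (Lam B : Set (Fin n → ℝ))
    (hex : ∀ u v : Fin n → ℝ, (∀ i, u i < v i) →
      ∃ lam ∈ Lam, ∃ beta ∈ B, ∃ s t : ℝ, s < t ∧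
        u = (fun i => s * lam i + beta i) ∧ v = (fun i => t * lam i + beta i))
    (huniq : ∀ u v : Fin n → ℝ, (∀ i, u i < v i) →
      ∀ lam ∈ Lam, ∀ beta ∈ B, ∀ lam' ∈ Lam, ∀ beta' ∈ B,
      ∀ s t s' t' : ℝ, s < t → s' < t' →
        u = (fun i => s * lam i + beta i) → v = (fun i => t * lam i + beta i) →
        u = (fun i => s' * lam' i + beta' i) → v = (fun i => t' * lam' i + beta' i) →
        lam = lam' ∧ beta = beta')
    (hcontain : ∀ lam ∈ Lam, ∀ beta ∈ B, ∀ s t : ℝ, s < t →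
      ∀ i, s * lam i + beta i < t * lam i + beta i) :
    ∀ w : Fin n → ℝ, (∀ i, 0 < w i) →
      ∃! lam, lam ∈ Lam ∧ ∃ a : ℝ, 0 < a ∧ ∀ i, w i = a * lam i :=
  unique_direction_through_positive_vector_general n Lam B hex huniq
end

section
/- Let n be a positive integer and let Λ, B ⊆ ℝⁿ be such that the family of half-planes {π_(λ,β)}_{(λ,β) ∈ Λ×B} foliates Δ⁺, i.e.: (existence) for every (u,v) ∈ Δ⁺ there exist λ ∈ Λ, β ∈ B, and real numbers s < t with u = s·λ + β and v = t·λ + β; (uniqueness) this pair (λ,β) is unique for each (u,v) ∈ Δ⁺; and (containment) for every (λ,β) ∈ Λ×B, π_(λ,β) ⊆ Δ⁺. Then every λ ∈ Λ is nonzero, and the normalization map λ ↦ λ/‖λ‖, where ‖λ‖ = √(λ_1² + ⋯ + λ_n²) is the Euclidean norm, is a bijection from Λ onto the set Λ* = {w ∈ ℝⁿ : w_i > 0 for every i and ‖w‖ = 1}. -/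
/-!
Containment applied at a single `β ∈ B` (which exists by the existence clause applied to the
pair `(0, 1)`) forces every `λ ∈ Λ` to have positive coordinates. For `w` with positive
coordinates the pair `(0, w)` lies on some `π_(λ,β)`, so `w` is a positive multiple of `λ`:
this gives surjectivity. If two elements of `Λ` are positive multiples `λ' = c • λ`, then
`(β, λ + β)` lies on both `π_(λ,β)` (at times `0, 1`) and `π_(λ',β)` (at times `0, 1/c`), so
uniqueness gives `λ = λ'`: this gives injectivity.
-/

open Finset

section Normalize

variable {ι : Type*} [Fintype ι]

noncomputable def l2norm (x : ι → ℝ) : ℝ := √(∑ i, x i ^ 2)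

noncomputable def l2Normalize (x : ι → ℝ) : ι → ℝ := fun i => x i / l2norm x

lemma l2norm_smul (c : ℝ) (x : ι → ℝ) : l2norm (c • x) = |c| * l2norm x := by
  simp only [l2norm, Pi.smul_apply, smul_eq_mul, mul_pow, ← mul_sum]
  rw [Real.sqrt_mul (sq_nonneg c), Real.sqrt_sq_eq_abs]

lemma l2norm_nonneg (x : ι → ℝ) : 0 ≤ l2norm x := Real.sqrt_nonneg _

lemma l2norm_pos [Nonempty ι] {x : ι → ℝ} (hx : ∀ i, 0 < x i) : 0 < l2norm x :=
  Real.sqrt_pos.2 (sum_pos (fun i _ => pow_pos (hx i) 2) univ_nonempty)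

lemma l2Normalize_eq_smul (x : ι → ℝ) : l2Normalize x = (l2norm x)⁻¹ • x := by
  ext i
  exact div_eq_inv_mul _ _

lemma l2Normalize_smul {c : ℝ} (hc : 0 < c) (x : ι → ℝ) :
    l2Normalize (c • x) = l2Normalize x := by
  rw [l2Normalize_eq_smul, l2Normalize_eq_smul, l2norm_smul, abs_of_pos hc, smul_smul,
    mul_inv, mul_comm c⁻¹, mul_assoc, inv_mul_cancel₀ hc.ne', mul_one]

lemma l2Normalize_of_l2norm_eq_one {x : ι → ℝ} (hx : l2norm x = 1) : l2Normalize x = x := by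
  rw [l2Normalize_eq_smul, hx, inv_one, one_smul]

lemma l2norm_l2Normalize {x : ι → ℝ} (hx : l2norm x ≠ 0) : l2norm (l2Normalize x) = 1 := by
  rw [l2Normalize_eq_smul, l2norm_smul, abs_inv, abs_of_nonneg (l2norm_nonneg x),
    inv_mul_cancel₀ hx]

lemma eq_smul_of_l2Normalize_eq {x y : ι → ℝ} (hy : l2norm y ≠ 0)
    (h : l2Normalize x = l2Normalize y) : y = (l2norm y / l2norm x) • x := by
  conv_lhs => rw [← smul_inv_smul₀ hy y, ← l2Normalize_eq_smul, ← h, l2Normalize_eq_smul]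
  rw [smul_smul, div_eq_mul_inv]

end Normalize

section HalfPlanes

variable {ι : Type*} {Lam B : Set (ι → ℝ)}

lemma pos_of_halfPlane_subset {lam beta : ι → ℝ}
    (h : ∀ s t : ℝ, s < t → ∀ i, s * lam i + beta i < t * lam i + beta i) (i : ι) :
    0 < lam i := by
  simpa using h 0 1 one_pos i

lemma exists_mem_smul_eq_of_pos
    (hex : ∀ u v : ι → ℝ, (∀ i, u i < v i) →
      ∃ lam ∈ Lam, ∃ beta ∈ B, ∃ s t : ℝ, s < t ∧
        u = (fun i => s * lam i + beta i) ∧ v = (fun i => t * lam i + beta i))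
    {w : ι → ℝ} (hw : ∀ i, 0 < w i) : ∃ lam ∈ Lam, ∃ c : ℝ, 0 < c ∧ c • lam = w := by
  obtain ⟨lam, hlam, beta, -, s, t, hst, hu, hv⟩ := hex 0 w hw
  refine ⟨lam, hlam, t - s, sub_pos.2 hst, funext fun i => ?_⟩
  have hui := congrFun hu i
  have hvi := congrFun hv i
  simp only [Pi.zero_apply] at hui hvi
  simp only [Pi.smul_apply, smul_eq_mul]
  linarith

lemma eq_of_smul_eq
    (huniq : ∀ u v : ι → ℝ, (∀ i, u i < v i) →
      ∀ lam ∈ Lam, ∀ beta ∈ B, ∀ lam' ∈ Lam, ∀ beta' ∈ B,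
      ∀ s t s' t' : ℝ, s < t → s' < t' →
        u = (fun i => s * lam i + beta i) → v = (fun i => t * lam i + beta i) →
        u = (fun i => s' * lam' i + beta' i) → v = (fun i => t' * lam' i + beta' i) →
        lam = lam' ∧ beta = beta')
    {lam lam' beta : ι → ℝ} (hlam : lam ∈ Lam) (hlam' : lam' ∈ Lam) (hbeta : beta ∈ B)
    (hpos : ∀ i, 0 < lam i) {c : ℝ} (hc : 0 < c) (h : c • lam = lam') : lam = lam' := by
  subst h
  refine (huniq beta (lam + beta) (fun i => by simpa using hpos i) lam hlam beta hbeta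
    (c • lam) hlam' beta hbeta 0 1 0 c⁻¹ one_pos (inv_pos.2 hc) ?_ ?_ ?_ ?_).1 <;>
    funext i <;> simp [hc.ne']

end HalfPlanes

/-- If the family of half-planes `{π_(λ,β)}_{(λ,β) ∈ Λ×B}` foliates `Δ⁺`
(existence, uniqueness, and containment), then every `λ ∈ Λ` is nonzero and the
normalization map `λ ↦ λ/‖λ‖` (Euclidean norm) is a bijection from `Λ` onto
`Λ* = {w : w_i > 0 for every i and ‖w‖ = 1}`. -/
theorem normalization_bijection (n : ℕ) (hn : 0 < n)
    (Lam B : Set (Fin n → ℝ))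
    (hex : ∀ u v : Fin n → ℝ, (∀ i, u i < v i) →
      ∃ lam ∈ Lam, ∃ beta ∈ B, ∃ s t : ℝ, s < t ∧
        u = (fun i => s * lam i + beta i) ∧ v = (fun i => t * lam i + beta i))
    (huniq : ∀ u v : Fin n → ℝ, (∀ i, u i < v i) →
      ∀ lam ∈ Lam, ∀ beta ∈ B, ∀ lam' ∈ Lam, ∀ beta' ∈ B,
      ∀ s t s' t' : ℝ, s < t → s' < t' →
        u = (fun i => s * lam i + beta i) → v = (fun i => t * lam i + beta i) →
        u = (fun i => s' * lam' i + beta' i) → v = (fun i => t' * lam' i + beta' i) →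
        lam = lam' ∧ beta = beta')
    (hcontain : ∀ lam ∈ Lam, ∀ beta ∈ B, ∀ s t : ℝ, s < t →
      ∀ i, s * lam i + beta i < t * lam i + beta i) :
    (∀ lam ∈ Lam, lam ≠ 0) ∧
    Set.BijOn (fun lam : Fin n → ℝ => fun i => lam i / Real.sqrt (∑ j, (lam j) ^ 2))
      Lam {w : Fin n → ℝ | (∀ i, 0 < w i) ∧ Real.sqrt (∑ i, (w i) ^ 2) = 1} := by
  have : Nonempty (Fin n) := ⟨⟨0, hn⟩⟩
  obtain ⟨-, -, beta, hbeta, -⟩ := hex 0 1 fun _ => zero_lt_one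
  have hpos : ∀ lam ∈ Lam, ∀ i, 0 < lam i := fun lam hlam =>
    pos_of_halfPlane_subset (hcontain lam hlam beta hbeta)
  have hnorm : ∀ lam ∈ Lam, 0 < l2norm lam := fun lam hlam => l2norm_pos (hpos lam hlam)
  refine ⟨fun lam hlam h => (hpos lam hlam ⟨0, hn⟩).ne' (by simp [h]), ?_, ?_, ?_⟩
  · exact fun lam hlam => ⟨fun i => div_pos (hpos lam hlam i) (hnorm lam hlam),
      l2norm_l2Normalize (hnorm lam hlam).ne'⟩
  · intro lam hlam lam' hlam' h
    exact eq_of_smul_eq huniq hlam hlam' hbeta (hpos lam hlam)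
      (div_pos (hnorm lam' hlam') (hnorm lam hlam))
      (eq_smul_of_l2Normalize_eq (hnorm lam' hlam').ne' h).symm
  · rintro w ⟨hw, hw1⟩
    obtain ⟨lam, hlam, c, hc, rfl⟩ := exists_mem_smul_eq_of_pos hex hw
    exact ⟨lam, hlam, (l2Normalize_smul hc lam).symm.trans (l2Normalize_of_l2norm_eq_one hw1)⟩
end

section
/- Let n be a positive integer, let Λ* = {λ ∈ ℝⁿ : λ_i > 0 for every i and Σ_{i=1}^n λ_i² = 1}, and let B ⊆ ℝⁿ. Assume that for every (u,v) ∈ Δ⁺ there exist λ ∈ Λ*, β ∈ B, and real numbers s < t with u = s·λ + β and v = t·λ + β. Then the map f : Λ*×B → ℝⁿ×ℝⁿ defined by f(λ,β) = ( λ, β − ((Σ_{i=1}^n β_i)/(Σ_{i=1}^n λ_i))·λ ) takes all its values in Adm_n, and f is surjective onto Adm_n: for every (l,b) ∈ Adm_n there exists (λ,β) ∈ Λ*×B with f(λ,β) = (l,b). -/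
/-!
Since `∑ λ > 0`, subtracting `(∑ β / ∑ λ) • λ` from `β` removes exactly the sum of `β`, so `f` lands
in `Adm_n`. For surjectivity, apply the hypothesis to `u = b`, `v = l + b`: this gives
`b = s • λ + β` and `l = (t - s) • λ`, so `t - s = 1` because `l` and `λ` are both unit vectors,
hence `λ = l`; and `∑ b = 0` forces `∑ β / ∑ λ = -s`, so `f (λ, β) = (l, b)`.
-/

/-- The set `Adm_n` of admissible pairs `(l, b)`:
`l i > 0` for every `i`, `∑ i, (l i)² = 1`, and `∑ i, b i = 0`. -/
def Adm (n : ℕ) : Set ((Fin n → ℝ) × (Fin n → ℝ)) :=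
  {p | (∀ i, 0 < p.1 i) ∧ (∑ i, (p.1 i) ^ 2 = 1) ∧ (∑ i, p.2 i = 0)}

open Finset Set

def posUnitVectors (ι : Type*) [Fintype ι] : Set (ι → ℝ) :=
  {l | (∀ i, 0 < l i) ∧ ∑ i, l i ^ 2 = 1}

section

variable {ι : Type*} [Fintype ι]

noncomputable def normalizationMap (p : (ι → ℝ) × (ι → ℝ)) : (ι → ℝ) × (ι → ℝ) :=
  (p.1, fun i => p.2 i - ((∑ j, p.2 j) / (∑ j, p.1 j)) * p.1 i)

theorem sum_pos_of_mem_posUnitVectors {l : ι → ℝ} (hl : l ∈ posUnitVectors ι) :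
    0 < ∑ i, l i := by
  obtain ⟨hpos, hnorm⟩ := hl
  have hne : (univ : Finset ι).Nonempty := by
    by_contra h
    simp [Finset.not_nonempty_iff_eq_empty.mp h] at hnorm
  exact sum_pos (fun i _ => hpos i) hne

theorem sum_normalizationMap_snd {p : (ι → ℝ) × (ι → ℝ)} (h : ∑ j, p.1 j ≠ 0) :
    ∑ i, (normalizationMap p).2 i = 0 := by
  simp only [normalizationMap, sum_sub_distrib, ← mul_sum, div_mul_cancel₀ _ h, sub_self]

theorem eq_one_of_sum_sq_mul_eq_one {lam : ι → ℝ} {c : ℝ} (hc : 0 ≤ c)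
    (hlam : ∑ i, lam i ^ 2 = 1) (h : ∑ i, (c * lam i) ^ 2 = 1) : c = 1 := by
  simp only [mul_pow, ← mul_sum, hlam, mul_one] at h
  exact (pow_eq_one_iff_of_nonneg hc two_ne_zero).mp h

theorem normalizationMap_eq_of_eq_add_smul {l b lam beta : ι → ℝ} {s t : ℝ}
    (hl : ∑ i, l i ^ 2 = 1) (hb : ∑ i, b i = 0) (hlam : lam ∈ posUnitVectors ι) (hst : s < t)
    (hu : b = s • lam + beta) (hv : l + b = t • lam + beta) :
    normalizationMap (lam, beta) = (l, b) := by
  have hl_eq : ∀ i, l i = (t - s) * lam i := fun i => by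
    have := congrFun hv i
    simp only [hu, Pi.add_apply, Pi.smul_apply, smul_eq_mul] at this
    linarith
  have hts : t - s = 1 :=
    eq_one_of_sum_sq_mul_eq_one (sub_nonneg.mpr hst.le) hlam.2 (by simpa only [hl_eq] using hl)
  have hlam_sum := sum_pos_of_mem_posUnitVectors hlam
  have hratio : (∑ j, beta j) / (∑ j, lam j) = -s := by
    simp only [hu, Pi.add_apply, Pi.smul_apply, smul_eq_mul, sum_add_distrib, ← mul_sum] at hb
    rw [div_eq_iff hlam_sum.ne']
    linarith
  ext i
  · simp [normalizationMap, hl_eq, hts]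
  · simp only [normalizationMap, hratio, hu, Pi.add_apply, Pi.smul_apply, smul_eq_mul]
    ring

end

theorem normalizationMap_mapsTo_Adm {n : ℕ} (B : Set (Fin n → ℝ)) :
    MapsTo normalizationMap (posUnitVectors (Fin n) ×ˢ B) (Adm n) := by
  rintro ⟨lam, beta⟩ ⟨hlam, -⟩
  exact ⟨hlam.1, hlam.2, sum_normalizationMap_snd (sum_pos_of_mem_posUnitVectors hlam).ne'⟩

theorem normalization_map_onto_Adm_general (n : ℕ)
    (B : Set (Fin n → ℝ))
    (LamStar : Set (Fin n → ℝ))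
    (hLamStar : LamStar = {l : Fin n → ℝ | (∀ i, 0 < l i) ∧ ∑ i, (l i) ^ 2 = 1})
    (hex : ∀ u v : Fin n → ℝ, (∀ i, u i < v i) →
      ∃ lam ∈ LamStar, ∃ beta ∈ B, ∃ s t : ℝ, s < t ∧
        u = (fun i => s * lam i + beta i) ∧ v = (fun i => t * lam i + beta i))
    (f : (Fin n → ℝ) × (Fin n → ℝ) → (Fin n → ℝ) × (Fin n → ℝ))
    (hf : ∀ p, f p = (p.1, fun i => p.2 i - ((∑ j, p.2 j) / (∑ j, p.1 j)) * p.1 i)) :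
    Set.MapsTo f (LamStar ×ˢ B) (Adm n) ∧ Set.SurjOn f (LamStar ×ˢ B) (Adm n) := by
  obtain rfl : LamStar = posUnitVectors (Fin n) := hLamStar
  obtain rfl : f = normalizationMap := funext hf
  refine ⟨normalizationMap_mapsTo_Adm B, ?_⟩
  rintro ⟨l, b⟩ ⟨hl_pos, hl_norm, hb_sum⟩
  obtain ⟨lam, hlam, beta, hbeta, s, t, hst, hu, hv⟩ :=
    hex b (fun i => l i + b i) fun i => lt_add_of_pos_left (b i) (hl_pos i)
  exact ⟨(lam, beta), ⟨hlam, hbeta⟩,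
    normalizationMap_eq_of_eq_add_smul hl_norm hb_sum hlam hst hu hv⟩

/-- Let `Λ* = {λ : λ_i > 0 for all i, ∑ λ_i² = 1}` and let `B ⊆ ℝⁿ` be such that
every point of `Δ⁺` lies on a half-plane `π_(λ,β)` with `(λ,β) ∈ Λ*×B`.  Then the
map `f(λ,β) = (λ, β − ((∑ β_i)/(∑ λ_i))·λ)` maps `Λ*×B` into `Adm_n`, and it is
surjective onto `Adm_n`. -/
theorem normalization_map_onto_Adm (n : ℕ) (hn : 0 < n)
    (B : Set (Fin n → ℝ))
    (LamStar : Set (Fin n → ℝ))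
    (hLamStar : LamStar = {l : Fin n → ℝ | (∀ i, 0 < l i) ∧ ∑ i, (l i) ^ 2 = 1})
    (hex : ∀ u v : Fin n → ℝ, (∀ i, u i < v i) →
      ∃ lam ∈ LamStar, ∃ beta ∈ B, ∃ s t : ℝ, s < t ∧
        u = (fun i => s * lam i + beta i) ∧ v = (fun i => t * lam i + beta i))
    (f : (Fin n → ℝ) × (Fin n → ℝ) → (Fin n → ℝ) × (Fin n → ℝ))
    (hf : ∀ p, f p = (p.1, fun i => p.2 i - ((∑ j, p.2 j) / (∑ j, p.1 j)) * p.1 i)) :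
    Set.MapsTo f (LamStar ×ˢ B) (Adm n) ∧ Set.SurjOn f (LamStar ×ˢ B) (Adm n) :=
  normalization_map_onto_Adm_general n B LamStar hLamStar hex f hf
end

section
/- Let n be a positive integer, let l ∈ ℝⁿ with l_i > 0 for every i, let b ∈ ℝⁿ, let s ∈ ℝ, and let y ∈ ℝⁿ. Then y_i ≤ s·l_i + b_i holds for every i = 1,…,n if and only if max_{i=1,…,n} (y_i − b_i)/l_i ≤ s. Consequently, for any topological space X and any continuous function φ = (φ_1,…,φ_n) : X → ℝⁿ, the sublevel set X⟨φ ⪯ s·l + b⟩ = {x ∈ X : φ_i(x) ≤ s·l_i + b_i for every i} coincides with the sublevel set {x ∈ X : F_(l,b)^φ(x) ≤ s}, where F_(l,b)^φ(x) = max_{i=1,…,n} (φ_i(x) − b_i)/l_i. -/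
open Finset

/-- For `l` with all components positive: `y_i ≤ s·l_i + b_i` for every `i` iff
`max_i (y_i − b_i)/l_i ≤ s`.  Consequently, for a continuous `φ : X → ℝⁿ`, the
sublevel set `X⟨φ ⪯ s·l + b⟩` coincides with `{x : F_(l,b)^φ(x) ≤ s}`, where
`F_(l,b)^φ(x) = max_i (φ_i(x) − b_i)/l_i`. -/
theorem sublevel_set_reduction (n : ℕ) (hn : 0 < n)
    (l b : Fin n → ℝ) (hl : ∀ i, 0 < l i) (s : ℝ) :
    (∀ y : Fin n → ℝ,
      ((∀ i, y i ≤ s * l i + b i) ↔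
        (Finset.univ.sup' (Finset.univ_nonempty_iff.mpr ⟨⟨0, hn⟩⟩)
          fun i => (y i - b i) / l i) ≤ s)) ∧
    (∀ (X : Type) [TopologicalSpace X] (φ : X → Fin n → ℝ), Continuous φ →
      {x : X | ∀ i, φ x i ≤ s * l i + b i} =
        {x : X | (Finset.univ.sup' (Finset.univ_nonempty_iff.mpr ⟨⟨0, hn⟩⟩)
          fun i => (φ x i - b i) / l i) ≤ s}) := by
  have key : ∀ y : Fin n → ℝ,
      ((∀ i, y i ≤ s * l i + b i) ↔
        (Finset.univ.sup' (Finset.univ_nonempty_iff.mpr ⟨⟨0, hn⟩⟩)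
          fun i => (y i - b i) / l i) ≤ s) := by
    intro y
    rw [Finset.sup'_le_iff]
    constructor
    · intro h i _
      rw [div_le_iff₀ (hl i)]
      linarith [h i, hl i]
    · intro h i
      have := h i (Finset.mem_univ i)
      rw [div_le_iff₀ (hl i)] at this
      linarith
  refine ⟨key, fun X _ φ _ => ?_⟩
  ext x
  exact key (φ x)
end
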